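/- If a comparator network C followed by a single comparator (i,j) with j > i+1 sorts all inputs, then the comparator (i,j) is redundant: for every input, the output of C already has its i-th entry ≤ its j-th entry. Equivalently, a sorting network's final comparator that acts nontrivially on some input must connect adjacent channels. -/

import Mathlib

/-- Apply a single comparator `(i,j)`: the value at `i` becomes the min and
the value at `j` becomes the max of the two compared values. -/
def applyComp {n : ℕ} {α : Type*} [LinearOrder α] (c : Fin n × Fin n)
    (v : Fin n → α) : Fin n → α :=
  fun k => if k = c.1 then min (v c.1) (v c.2)
           else if k = c.2 then max (v c.1) (v c.2) else v k

/-- Apply a comparator network (a list of comparators) in sequence. -/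
def applyNet {n : ℕ} {α : Type*} [LinearOrder α]
    (C : List (Fin n × Fin n)) (v : Fin n → α) : Fin n → α :=
  C.foldl (fun w c => applyComp c w) v

/-- A comparator network is valid if every comparator `(i,j)` has `i < j`. -/
def ValidNet {n : ℕ} (C : List (Fin n × Fin n)) : Prop :=
  ∀ c ∈ C, c.1 < c.2

namespace SNAux

open Finset

variable {n : ℕ}

def cnt (v : Fin n → Bool) : ℕ := ∑ p, (v p).toNat

def suff (k : ℕ) (v : Fin n → Bool) : ℕ := ∑ p : Fin n, if k ≤ (p : ℕ) then (v p).toNat else 0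

def pre (m : ℕ) (v : Fin n → Bool) : ℕ := ∑ p : Fin n, if (p : ℕ) ≤ m then (v p).toNat else 0

lemma sum_split (g : Fin n → ℕ) {a b : Fin n} (hab : a ≠ b) :
    ∑ p, g p = g a + g b + ∑ p ∈ (univ.erase a).erase b, g p := by
  rw [← Finset.add_sum_erase _ g (mem_univ a),
      ← Finset.add_sum_erase _ g (Finset.mem_erase.mpr ⟨hab.symm, mem_univ b⟩)]
  ring

lemma applyComp_fst (c : Fin n × Fin n) (v : Fin n → Bool) :
    applyComp c v c.1 = min (v c.1) (v c.2) := by simp [applyComp]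

lemma applyComp_snd (c : Fin n × Fin n) (hc : c.1 ≠ c.2) (v : Fin n → Bool) :
    applyComp c v c.2 = max (v c.1) (v c.2) := by simp [applyComp, hc.symm]

lemma applyComp_other (c : Fin n × Fin n) (v : Fin n → Bool) {p : Fin n}
    (h1 : p ≠ c.1) (h2 : p ≠ c.2) : applyComp c v p = v p := by simp [applyComp, h1, h2]

lemma cnt_applyComp (c : Fin n × Fin n) (hc : c.1 ≠ c.2) (v : Fin n → Bool) :
    cnt (applyComp c v) = cnt v := by
  unfold cnt
  rw [sum_split (fun p => ((applyComp c v) p).toNat) hc,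
      sum_split (fun p => ((v p).toNat)) hc]
  have h3 : ∑ p ∈ (univ.erase c.1).erase c.2, ((applyComp c v) p).toNat
      = ∑ p ∈ (univ.erase c.1).erase c.2, (v p).toNat := by
    refine Finset.sum_congr rfl fun p hp => ?_
    simp only [Finset.mem_erase] at hp
    rw [applyComp_other c v hp.2.1 hp.1]
  rw [h3, applyComp_fst, applyComp_snd c hc]
  cases v c.1 <;> cases v c.2 <;> simp

lemma suff_applyComp (k : ℕ) (c : Fin n × Fin n) (hc : c.1 < c.2) (v : Fin n → Bool) :
    suff k v ≤ suff k (applyComp c v) := by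
  have hne : c.1 ≠ c.2 := ne_of_lt hc
  unfold suff
  rw [sum_split (fun p => if k ≤ (p : ℕ) then ((applyComp c v) p).toNat else 0) hne,
      sum_split (fun p => if k ≤ (p : ℕ) then (v p).toNat else 0) hne]
  have h3 : ∑ p ∈ (univ.erase c.1).erase c.2,
      (if k ≤ (p : ℕ) then ((applyComp c v) p).toNat else 0)
      = ∑ p ∈ (univ.erase c.1).erase c.2, (if k ≤ (p : ℕ) then (v p).toNat else 0) := by
    refine Finset.sum_congr rfl fun p hp => ?_
    simp only [Finset.mem_erase] at hp
    rw [applyComp_other c v hp.2.1 hp.1]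
  rw [h3, applyComp_fst, applyComp_snd c hne]
  have hlt : (c.1 : ℕ) < (c.2 : ℕ) := hc
  have hpair : (if k ≤ (c.1 : ℕ) then (v c.1).toNat else 0)
      + (if k ≤ (c.2 : ℕ) then (v c.2).toNat else 0)
      ≤ (if k ≤ (c.1 : ℕ) then (min (v c.1) (v c.2)).toNat else 0)
      + (if k ≤ (c.2 : ℕ) then (max (v c.1) (v c.2)).toNat else 0) := by
    rcases le_or_gt k (c.1 : ℕ) with h | h
    · have h' : k ≤ (c.2 : ℕ) := by omega
      simp only [if_pos h, if_pos h']
      cases v c.1 <;> cases v c.2 <;> simp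
    · rcases le_or_gt k (c.2 : ℕ) with h2 | h2
      · simp only [if_neg (not_le.mpr h), if_pos h2]
        cases v c.1 <;> cases v c.2 <;> simp
      · simp [not_le.mpr h, not_le.mpr h2]
  omega

lemma applyNet_nil {α : Type*} [LinearOrder α] (v : Fin n → α) : applyNet [] v = v := rfl

lemma applyNet_cons {α : Type*} [LinearOrder α] (c : Fin n × Fin n)
    (Cs : List (Fin n × Fin n)) (v : Fin n → α) :
    applyNet (c :: Cs) v = applyNet Cs (applyComp c v) := rfl

lemma applyNet_append {α : Type*} [LinearOrder α] (C D : List (Fin n × Fin n))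
    (v : Fin n → α) : applyNet (C ++ D) v = applyNet D (applyNet C v) :=
  List.foldl_append

lemma cnt_applyNet {C : List (Fin n × Fin n)} (hC : ValidNet C) (v : Fin n → Bool) :
    cnt (applyNet C v) = cnt v := by
  induction C generalizing v with
  | nil => rfl
  | cons c Cs ih =>
    rw [applyNet_cons, ih (fun d hd => hC d (List.mem_cons_of_mem _ hd)),
        cnt_applyComp c (ne_of_lt (hC c (List.mem_cons_self))) v]

lemma suff_applyNet (k : ℕ) {C : List (Fin n × Fin n)} (hC : ValidNet C) (v : Fin n → Bool) :
    suff k v ≤ suff k (applyNet C v) := by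
  induction C generalizing v with
  | nil => exact le_rfl
  | cons c Cs ih =>
    rw [applyNet_cons]
    exact le_trans (suff_applyComp k c (hC c (List.mem_cons_self)) v)
      (ih (fun d hd => hC d (List.mem_cons_of_mem _ hd)) _)

lemma applyComp_mono {α : Type*} [LinearOrder α] (c : Fin n × Fin n)
    {v v' : Fin n → α} (h : v ≤ v') : applyComp c v ≤ applyComp c v' := by
  intro p
  simp only [applyComp]
  split_ifs
  · exact min_le_min (h _) (h _)
  · exact max_le_max (h _) (h _)
  · exact h p

lemma applyNet_mono {α : Type*} [LinearOrder α] (C : List (Fin n × Fin n))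
    {v v' : Fin n → α} (h : v ≤ v') : applyNet C v ≤ applyNet C v' := by
  induction C generalizing v v' with
  | nil => exact h
  | cons c Cs ih => exact ih (applyComp_mono c h)

lemma flip_exists {w w' : Fin n → Bool} (hle : w ≤ w') (hcnt : cnt w' = cnt w + 1) :
    ∃ s, w s = false ∧ w' s = true ∧ ∀ p, p ≠ s → w' p = w p := by
  have key : ∀ p, (w' p).toNat = (w p).toNat + (if w p = w' p then 0 else 1) := by
    intro p
    have := hle p
    cases hp : w p <;> cases hp' : w' p <;> simp_all <;> exact absurd this (show ¬ (true ≤ false) by decide)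
  have hsum : cnt w' = cnt w + ∑ p, (if w p = w' p then 0 else 1) := by
    unfold cnt
    rw [← Finset.sum_add_distrib]
    exact Finset.sum_congr rfl fun p _ => key p
  have hone : ∑ p, (if w p = w' p then 0 else 1) = 1 := by omega
  have hcard : (univ.filter (fun p => ¬ (w p = w' p))).card = 1 := by
    calc (univ.filter (fun p => ¬ (w p = w' p))).card
        = ∑ p : Fin n, if ¬ (w p = w' p) then 1 else 0 := Finset.card_filter _ _
      _ = ∑ p : Fin n, if w p = w' p then 0 else 1 :=
          Finset.sum_congr rfl fun p _ => by by_cases h : w p = w' p <;> simp [h]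
      _ = 1 := hone
  obtain ⟨s, hs⟩ := Finset.card_eq_one.mp hcard
  have hsmem : s ∈ univ.filter (fun p => ¬ (w p = w' p)) := hs ▸ Finset.mem_singleton_self s
  have hsne : ¬ (w s = w' s) := (Finset.mem_filter.mp hsmem).2
  have hsle := hle s
  refine ⟨s, ?_, ?_, ?_⟩
  · cases h : w s <;> cases h' : w' s <;> simp_all <;> exact absurd hsle (show ¬ (true ≤ false) by decide)
  · cases h : w s <;> cases h' : w' s <;> simp_all <;> exact absurd hsle (show ¬ (true ≤ false) by decide)
  · intro p hp
    by_contra h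
    have : p ∈ univ.filter (fun p => ¬ (w p = w' p)) :=
      Finset.mem_filter.mpr ⟨mem_univ p, fun he => h he.symm⟩
    rw [hs, Finset.mem_singleton] at this
    exact hp this

lemma sum_split1 (g : Fin n → ℕ) (a : Fin n) :
    ∑ p, g p = g a + ∑ p ∈ univ.erase a, g p :=
  (Finset.add_sum_erase _ g (mem_univ a)).symm

lemma cnt_update_aux (v : Fin n → Bool) (q : Fin n) (b : Bool) :
    cnt (Function.update v q b) + (v q).toNat = cnt v + b.toNat := by
  unfold cnt
  rw [sum_split1 (fun p => ((Function.update v q b) p).toNat) q,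
      sum_split1 (fun p => (v p).toNat) q]
  have hrest : ∑ p ∈ univ.erase q, ((Function.update v q b) p).toNat
      = ∑ p ∈ univ.erase q, (v p).toNat :=
    Finset.sum_congr rfl fun p hp => by
      rw [Function.update_of_ne (Finset.mem_erase.mp hp).1]
  rw [hrest, Function.update_self]
  ring

lemma cnt_update_true {v : Fin n → Bool} {q : Fin n} (hq : v q = false) :
    cnt (Function.update v q true) = cnt v + 1 := by
  have := cnt_update_aux v q true
  rw [hq] at this
  simpa using this

lemma cnt_update_false {v : Fin n → Bool} {q : Fin n} (hq : v q = true) :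
    cnt v = cnt (Function.update v q false) + 1 := by
  have := cnt_update_aux v q false
  rw [hq] at this
  simp at this
  omega

lemma pre_update_aux {m : ℕ} (v : Fin n → Bool) {q : Fin n} (hq : (q : ℕ) ≤ m) (b : Bool) :
    pre m (Function.update v q b) + (v q).toNat = pre m v + b.toNat := by
  unfold pre
  rw [sum_split1 (fun p => if (p : ℕ) ≤ m then ((Function.update v q b) p).toNat else 0) q,
      sum_split1 (fun p => if (p : ℕ) ≤ m then (v p).toNat else 0) q]
  have hrest : ∑ p ∈ univ.erase q, (if (p : ℕ) ≤ m then ((Function.update v q b) p).toNat else 0)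
      = ∑ p ∈ univ.erase q, (if (p : ℕ) ≤ m then (v p).toNat else 0) :=
    Finset.sum_congr rfl fun p hp => by
      rw [Function.update_of_ne (Finset.mem_erase.mp hp).1]
  rw [hrest, Function.update_self, if_pos hq, if_pos hq]
  ring

lemma pre_update_gt {m : ℕ} (v : Fin n → Bool) {q : Fin n} (hq : m < (q : ℕ)) (b : Bool) :
    pre m (Function.update v q b) = pre m v := by
  unfold pre
  refine Finset.sum_congr rfl fun p _ => ?_
  by_cases hpq : p = q
  · subst hpq
    rw [if_neg (by omega), if_neg (by omega)]
  · rw [Function.update_of_ne hpq]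

lemma pre_ge_one {m : ℕ} {v : Fin n → Bool} {p : Fin n} (hp1 : (p : ℕ) ≤ m)
    (hp2 : v p = true) : 1 ≤ pre m v := by
  have h := Finset.single_le_sum
    (f := fun r : Fin n => if (r : ℕ) ≤ m then (v r).toNat else 0)
    (fun q _ => Nat.zero_le _) (mem_univ p)
  simp only [if_pos hp1, hp2] at h
  exact h

def NT {n : ℕ} (C : List (Fin n × Fin n)) (i j : Fin n) (v : Fin n → Bool) : Prop :=
  applyNet C v i = true ∧ applyNet C v j = false

variable {C : List (Fin n × Fin n)} {i j : Fin n}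

lemma G_eq (v : Fin n → Bool) :
    applyNet (C ++ [(i, j)]) v = applyComp (i, j) (applyNet C v) := by
  rw [applyNet_append]; rfl

lemma validNet_append (hC : ValidNet C) (hij : i < j) : ValidNet (C ++ [(i, j)]) := by
  intro c hc
  rcases List.mem_append.mp hc with h | h
  · exact hC c h
  · simp only [List.mem_singleton] at h; subst h; exact hij

lemma z_i (hij : i < j) {v : Fin n → Bool} (hNT : NT C i j v) :
    applyNet (C ++ [(i, j)]) v i = false := by
  rw [G_eq]
  simp [applyComp, hNT.1, hNT.2]

lemma z_j (hij : i < j) {v : Fin n → Bool} (hNT : NT C i j v) :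
    applyNet (C ++ [(i, j)]) v j = true := by
  rw [G_eq]
  simp [applyComp, (ne_of_lt hij).symm, hNT.1, hNT.2]

lemma exists_one_lo (hC : ValidNet C) {v : Fin n → Bool} (hNT : NT C i j v) :
    ∃ p : Fin n, (p : ℕ) ≤ (i : ℕ) ∧ v p = true := by
  by_contra hcon
  push_neg at hcon
  have h1 : suff ((i : ℕ) + 1) v = cnt v := by
    unfold suff cnt
    refine Finset.sum_congr rfl fun p _ => ?_
    by_cases h : (i : ℕ) + 1 ≤ (p : ℕ)
    · rw [if_pos h]
    · rw [if_neg h]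
      have hv : v p ≠ true := hcon p (by omega)
      simp only [ne_eq, Bool.not_eq_true] at hv
      rw [hv]
      rfl
  have h2 : suff ((i : ℕ) + 1) (applyNet C v) < cnt (applyNet C v) := by
    unfold suff cnt
    refine Finset.sum_lt_sum (fun p _ => ?_) ⟨i, mem_univ i, ?_⟩
    · by_cases h : (i : ℕ) + 1 ≤ (p : ℕ) <;> simp [h]
    · rw [if_neg (by omega), hNT.1]
      norm_num
  have h3 := suff_applyNet ((i : ℕ) + 1) hC v
  have h4 := cnt_applyNet hC v
  omega

lemma exists_zero_hi (hC : ValidNet C) {v : Fin n → Bool} (hNT : NT C i j v) :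
    ∃ q : Fin n, (j : ℕ) ≤ (q : ℕ) ∧ v q = false := by
  by_contra hcon
  push_neg at hcon
  have h2 : suff (j : ℕ) (applyNet C v) < suff (j : ℕ) v := by
    unfold suff
    refine Finset.sum_lt_sum (fun p _ => ?_) ⟨j, mem_univ j, ?_⟩
    · by_cases h : (j : ℕ) ≤ (p : ℕ)
      · rw [if_pos h, if_pos h]
        have hv : v p ≠ false := hcon p h
        simp only [ne_eq, Bool.not_eq_false] at hv
        rw [hv]
        exact Bool.toNat_le _
      · rw [if_neg h, if_neg h]
    · have hv : v j ≠ false := hcon j le_rfl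
      simp only [ne_eq, Bool.not_eq_false] at hv
      rw [if_pos le_rfl, if_pos le_rfl, hNT.2, hv]
      norm_num
  have h3 := suff_applyNet (j : ℕ) hC v
  omega


lemma le_update_true {v : Fin n → Bool} {q : Fin n} (hq : v q = false) :
    v ≤ Function.update v q true := by
  intro p
  by_cases hpq : p = q
  · subst hpq; rw [Function.update_self, hq]; exact Bool.false_le _
  · rw [Function.update_of_ne hpq]

lemma update_false_le {v : Fin n → Bool} {q : Fin n} :
    Function.update v q false ≤ v := by
  intro p
  by_cases hpq : p = q
  · subst hpq; rw [Function.update_self]; exact Bool.false_le _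
  · rw [Function.update_of_ne hpq]

lemma up_flip (hC : ValidNet C) (hij : i < j)
    (hsort : ∀ v : Fin n → Bool, Monotone (applyNet (C ++ [(i, j)]) v))
    (hn : (i : ℕ) + 1 < n)
    {v : Fin n → Bool} (hNT : NT C i j v)
    (hz1 : applyNet (C ++ [(i, j)]) v ⟨(i : ℕ) + 1, hn⟩ = false)
    {q : Fin n} (hq : v q = false) :
    NT C i j (Function.update v q true) := by
  set v'' := Function.update v q true with hv''def
  have hle : v ≤ v'' := le_update_true hq
  have hcv : cnt v'' = cnt v + 1 := cnt_update_true hq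
  have hwle : applyNet C v ≤ applyNet C v'' := applyNet_mono C hle
  have hcw : cnt (applyNet C v'') = cnt (applyNet C v) + 1 := by
    rw [cnt_applyNet hC, cnt_applyNet hC, hcv]
  obtain ⟨s, hs1, hs2, hs3⟩ := flip_exists hwle hcw
  by_cases hsi : s = i
  · exfalso; subst hsi; rw [hNT.1] at hs1; exact Bool.noConfusion hs1
  by_cases hsj : s = j
  · exfalso
    have hs2j : applyNet C v'' j = true := by rw [← hsj]; exact hs2
    have hw''i : applyNet C v'' i = true := by
      rw [hs3 i (by rw [hsj]; exact ne_of_lt hij)]; exact hNT.1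
    have hz''i : applyNet (C ++ [(i, j)]) v'' i = true := by
      rw [G_eq]
      simp [applyComp, hw''i, hs2j]
    have hzle : applyNet (C ++ [(i, j)]) v ≤ applyNet (C ++ [(i, j)]) v'' :=
      applyNet_mono _ hle
    have hcz : cnt (applyNet (C ++ [(i, j)]) v'') = cnt (applyNet (C ++ [(i, j)]) v) + 1 := by
      rw [cnt_applyNet (validNet_append hC hij), cnt_applyNet (validNet_append hC hij), hcv]
    obtain ⟨s', h1', h2', h3'⟩ := flip_exists hzle hcz
    have hzi : applyNet (C ++ [(i, j)]) v i = false := z_i hij hNT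
    have hsi' : s' = i := by
      by_contra hne
      have h := h3' i (fun h => hne h.symm)
      rw [hz''i, hzi] at h
      exact Bool.noConfusion h
    have hne1 : (⟨(i : ℕ) + 1, hn⟩ : Fin n) ≠ s' := by
      subst hsi'
      intro h
      have := congrArg Fin.val h
      simp at this
    have hz''1 : applyNet (C ++ [(i, j)]) v'' ⟨(i : ℕ) + 1, hn⟩ = false := by
      rw [h3' _ hne1, hz1]
    have hmono := hsort v'' (show i ≤ (⟨(i : ℕ) + 1, hn⟩ : Fin n) by
      simp [Fin.le_def])
    rw [hz''i, hz''1] at hmono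
    exact absurd hmono (by decide)
  · constructor
    · rw [hs3 i (fun h => hsi h.symm)]; exact hNT.1
    · rw [hs3 j (fun h => hsj h.symm)]; exact hNT.2

lemma up_thresh (hC : ValidNet C) (hij : i < j)
    (hsort : ∀ v : Fin n → Bool, Monotone (applyNet (C ++ [(i, j)]) v))
    (hj1 : (j : ℕ) - 1 < n)
    {v v'' : Fin n → Bool} (hle : v ≤ v'') (hcv : cnt v'' = cnt v + 1)
    (hzj : applyNet (C ++ [(i, j)]) v j = true) :
    applyNet (C ++ [(i, j)]) v'' ⟨(j : ℕ) - 1, hj1⟩ = true := by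
  have hzle : applyNet (C ++ [(i, j)]) v ≤ applyNet (C ++ [(i, j)]) v'' :=
    applyNet_mono _ hle
  have hcz : cnt (applyNet (C ++ [(i, j)]) v'') = cnt (applyNet (C ++ [(i, j)]) v) + 1 := by
    rw [cnt_applyNet (validNet_append hC hij), cnt_applyNet (validNet_append hC hij), hcv]
  obtain ⟨s', h1', h2', h3'⟩ := flip_exists hzle hcz
  have hlt : (s' : ℕ) < (j : ℕ) := by
    rcases lt_trichotomy (s' : ℕ) (j : ℕ) with h | h | h
    · exact h
    · exfalso
      have : s' = j := Fin.ext h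
      rw [this, hzj] at h1'
      exact Bool.noConfusion h1'
    · exfalso
      have hmono := hsort v (show j ≤ s' from Fin.le_def.mpr (le_of_lt h))
      rw [hzj, h1'] at hmono
      exact absurd hmono (by decide)
  have hle2 : s' ≤ (⟨(j : ℕ) - 1, hj1⟩ : Fin n) := by
    rw [Fin.le_def]; simp; omega
  have hmono := hsort v'' hle2
  rw [h2'] at hmono
  cases h : applyNet (C ++ [(i, j)]) v'' ⟨(j : ℕ) - 1, hj1⟩
  · rw [h] at hmono; exact absurd hmono (by decide)
  · rfl

lemma down_flip (hC : ValidNet C) (hij : i < j) (hij2 : (i : ℕ) + 2 ≤ (j : ℕ))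
    (hsort : ∀ v : Fin n → Bool, Monotone (applyNet (C ++ [(i, j)]) v))
    (hj1n : (j : ℕ) - 1 < n)
    {v : Fin n → Bool} (hNT : NT C i j v)
    (hzj1 : applyNet (C ++ [(i, j)]) v ⟨(j : ℕ) - 1, hj1n⟩ = true)
    {p0 : Fin n} (hp : v p0 = true) :
    NT C i j (Function.update v p0 false) := by
  set v' := Function.update v p0 false with hv'def
  have hle : v' ≤ v := update_false_le
  have hcv : cnt v = cnt v' + 1 := cnt_update_false hp
  have hwle : applyNet C v' ≤ applyNet C v := applyNet_mono C hle
  have hcw : cnt (applyNet C v) = cnt (applyNet C v') + 1 := by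
    rw [cnt_applyNet hC, cnt_applyNet hC, hcv]
  obtain ⟨r, hr1, hr2, hr3⟩ := flip_exists hwle hcw
  by_cases hrj : r = j
  · exfalso; subst hrj; rw [hNT.2] at hr2; exact Bool.noConfusion hr2
  by_cases hri : r = i
  · exfalso
    have hr1i : applyNet C v' i = false := by rw [← hri]; exact hr1
    have hw'j : applyNet C v' j = false := by
      rw [← hr3 j (by rw [hri]; exact ne_of_gt hij)]; exact hNT.2
    have hz'j : applyNet (C ++ [(i, j)]) v' j = false := by
      rw [G_eq]
      simp [applyComp, (ne_of_lt hij).symm, hr1i, hw'j]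
    have hzle : applyNet (C ++ [(i, j)]) v' ≤ applyNet (C ++ [(i, j)]) v :=
      applyNet_mono _ hle
    have hcz : cnt (applyNet (C ++ [(i, j)]) v) = cnt (applyNet (C ++ [(i, j)]) v') + 1 := by
      rw [cnt_applyNet (validNet_append hC hij), cnt_applyNet (validNet_append hC hij), hcv]
    obtain ⟨r', h1', h2', h3'⟩ := flip_exists hzle hcz
    have hzj : applyNet (C ++ [(i, j)]) v j = true := z_j hij hNT
    have hrj' : r' = j := by
      by_contra hne
      have h := h3' j (fun h => hne h.symm)
      rw [hzj, hz'j] at h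
      exact Bool.noConfusion h
    have hne1 : (⟨(j : ℕ) - 1, hj1n⟩ : Fin n) ≠ r' := by
      subst hrj'
      intro h
      have := congrArg Fin.val h
      simp at this
      omega
    have hz'j1 : applyNet (C ++ [(i, j)]) v' ⟨(j : ℕ) - 1, hj1n⟩ = true := by
      rw [← h3' _ hne1, hzj1]
    have hmono := hsort v' (show (⟨(j : ℕ) - 1, hj1n⟩ : Fin n) ≤ j by
      simp [Fin.le_def])
    rw [hz'j1, hz'j] at hmono
    exact absurd hmono (by decide)
  · constructor
    · rw [← hr3 i (fun h => hri h.symm)]; exact hNT.1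
    · rw [← hr3 j (fun h => hrj h.symm)]; exact hNT.2

lemma down_thresh (hC : ValidNet C) (hij : i < j)
    (hsort : ∀ v : Fin n → Bool, Monotone (applyNet (C ++ [(i, j)]) v))
    (hn : (i : ℕ) + 1 < n)
    {v v' : Fin n → Bool} (hle : v' ≤ v) (hcv : cnt v = cnt v' + 1)
    (hzi : applyNet (C ++ [(i, j)]) v i = false)
    (hzi1 : applyNet (C ++ [(i, j)]) v ⟨(i : ℕ) + 1, hn⟩ = true) :
    applyNet (C ++ [(i, j)]) v' ⟨(i : ℕ) + 1, hn⟩ = false := by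
  have hzle : applyNet (C ++ [(i, j)]) v' ≤ applyNet (C ++ [(i, j)]) v :=
    applyNet_mono _ hle
  have hcz : cnt (applyNet (C ++ [(i, j)]) v) = cnt (applyNet (C ++ [(i, j)]) v') + 1 := by
    rw [cnt_applyNet (validNet_append hC hij), cnt_applyNet (validNet_append hC hij), hcv]
  obtain ⟨r', h1', h2', h3'⟩ := flip_exists hzle hcz
  have hgt : (i : ℕ) < (r' : ℕ) := by
    rcases lt_trichotomy (i : ℕ) (r' : ℕ) with h | h | h
    · exact h
    · exfalso
      have : r' = i := Fin.ext h.symm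
      rw [this, hzi] at h2'
      exact Bool.noConfusion h2'
    · exfalso
      have hmono := hsort v (show r' ≤ i from Fin.le_def.mpr (le_of_lt h))
      rw [h2', hzi] at hmono
      exact absurd hmono (by decide)
  by_cases h : r' = (⟨(i : ℕ) + 1, hn⟩ : Fin n)
  · rw [← h]; exact h1'
  · exfalso
    have hgt2 : (i : ℕ) + 1 < (r' : ℕ) := by
      have : (r' : ℕ) ≠ (i : ℕ) + 1 := fun he => h (Fin.ext he)
      omega
    have hz'i1 : applyNet (C ++ [(i, j)]) v' ⟨(i : ℕ) + 1, hn⟩ = true := by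
      rw [← h3' _ (fun he => h he.symm), hzi1]
    have hmono := hsort v' (show (⟨(i : ℕ) + 1, hn⟩ : Fin n) ≤ r' from
      Fin.le_def.mpr (le_of_lt hgt2))
    rw [hz'i1, h1'] at hmono
    exact absurd hmono (by decide)

lemma bool_true_of_le {a b : Bool} (h : a ≤ b) (ha : a = true) : b = true := by
  cases b
  · rw [ha] at h; exact absurd h (by decide)
  · rfl

lemma no_NT (hC : ValidNet C) (hij : i < j) (hij2 : (i : ℕ) + 2 ≤ (j : ℕ))
    (hsort : ∀ v : Fin n → Bool, Monotone (applyNet (C ++ [(i, j)]) v)) :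
    ∀ μ (v : Fin n → Bool), NT C i j v → pre (i : ℕ) v = μ → False := by
  have hn : (i : ℕ) + 1 < n := by have := j.isLt; omega
  have hj1 : (j : ℕ) - 1 < n := by have := j.isLt; omega
  intro μ
  induction μ using Nat.strong_induction_on with
  | _ μ ih =>
    intro v hNT hμ
    obtain ⟨p0, hp1, hp2⟩ := exists_one_lo hC hNT
    obtain ⟨q0, hq1, hq2⟩ := exists_zero_hi hC hNT
    have hpq : p0 ≠ q0 := by
      intro h
      have : (p0 : ℕ) = (q0 : ℕ) := congrArg Fin.val h
      omega
    have hμ1 : 1 ≤ μ := hμ ▸ pre_ge_one hp1 hp2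
    by_cases hz1 : applyNet (C ++ [(i, j)]) v ⟨(i : ℕ) + 1, hn⟩ = false
    · set v'' := Function.update v q0 true with hv''
      have hNT'' : NT C i j v'' := up_flip hC hij hsort hn hNT hz1 hq2
      have hthr : applyNet (C ++ [(i, j)]) v'' ⟨(j : ℕ) - 1, hj1⟩ = true :=
        up_thresh hC hij hsort hj1 (le_update_true hq2) (cnt_update_true hq2) (z_j hij hNT)
      have hv''p : v'' p0 = true := by
        rw [hv'', Function.update_of_ne hpq]; exact hp2
      have hNT2 : NT C i j (Function.update v'' p0 false) :=
        down_flip hC hij hij2 hsort hj1 hNT'' hthr hv''p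
      have e1 : pre (i : ℕ) v'' = pre (i : ℕ) v := pre_update_gt v (by omega) true
      have e2 : pre (i : ℕ) (Function.update v'' p0 false) + 1 = pre (i : ℕ) v'' := by
        have h := pre_update_aux v'' (q := p0) hp1 false
        rw [hv''p] at h
        simpa using h
      exact ih (μ - 1) (by omega) _ hNT2 (by omega)
    · have hz1' : applyNet (C ++ [(i, j)]) v ⟨(i : ℕ) + 1, hn⟩ = true := by
        cases h : applyNet (C ++ [(i, j)]) v ⟨(i : ℕ) + 1, hn⟩
        · exact absurd h hz1
        · rfl
      have hzj1 : applyNet (C ++ [(i, j)]) v ⟨(j : ℕ) - 1, hj1⟩ = true := by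
        have hmono := hsort v (show (⟨(i : ℕ) + 1, hn⟩ : Fin n) ≤ ⟨(j : ℕ) - 1, hj1⟩ by
          rw [Fin.le_def]; simp; omega)
        exact bool_true_of_le hmono hz1'
      set v' := Function.update v p0 false with hv'
      have hNT' : NT C i j v' := down_flip hC hij hij2 hsort hj1 hNT hzj1 hp2
      have hthr : applyNet (C ++ [(i, j)]) v' ⟨(i : ℕ) + 1, hn⟩ = false :=
        down_thresh hC hij hsort hn update_false_le (cnt_update_false hp2) (z_i hij hNT) hz1'
      have hv'q : v' q0 = false := by
        rw [hv', Function.update_of_ne (Ne.symm hpq)]; exact hq2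
      have hNT2 : NT C i j (Function.update v' q0 true) :=
        up_flip hC hij hsort hn hNT' hthr hv'q
      have e1 : pre (i : ℕ) v' + 1 = pre (i : ℕ) v := by
        have h := pre_update_aux v (q := p0) hp1 false
        rw [hp2] at h
        simpa using h
      have e2 : pre (i : ℕ) (Function.update v' q0 true) = pre (i : ℕ) v' :=
        pre_update_gt v' (by omega) true
      exact ih (μ - 1) (by omega) _ hNT2 (by omega)

end SNAux

/-- A sorting network's final comparator that acts nontrivially on some input
must connect adjacent channels: if `C` followed by `(i,j)` sorts all 0-1
inputs and the final comparator changes the output on some input, then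
`j = i + 1`. -/
theorem final_comparator_adjacent {n : ℕ} (C : List (Fin n × Fin n))
    (hC : ValidNet C) (i j : Fin n) (hij : i < j)
    (hsort : ∀ v : Fin n → Bool, Monotone (applyNet (C ++ [(i, j)]) v))
    (hnontriv : ∃ v : Fin n → Bool, applyNet (C ++ [(i, j)]) v ≠ applyNet C v) :
    (j : ℕ) = (i : ℕ) + 1 := by
  by_contra hne
  have hijv : (i : ℕ) < (j : ℕ) := hij
  have hij2 : (i : ℕ) + 2 ≤ (j : ℕ) := by omega
  obtain ⟨v, hv⟩ := hnontriv
  have key : SNAux.NT C i j v := by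
    constructor
    all_goals by_contra hN
    all_goals apply hv
    all_goals {
      have hle : applyNet C v i ≤ applyNet C v j := by
        first
        | · cases h1 : applyNet C v i
            · exact Bool.false_le _
            · exact absurd h1 hN
        | · cases h2 : applyNet C v j
            · exact absurd h2 hN
            · exact Bool.le_true _
      rw [SNAux.G_eq]
      funext k
      by_cases hk1 : k = i
      · subst hk1
        simp [applyComp, min_eq_left hle]
      · by_cases hk2 : k = j
        · subst hk2
          simp [applyComp, (ne_of_lt hij).symm, max_eq_right hle]
        · simp [applyComp, hk1, hk2]
    }
  exact SNAux.no_NT hC hij hij2 hsort (SNAux.pre (i : ℕ) v) v key rfl
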